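/- arXiv:2405.00357 — 3 statements merged into one kernel-verified Lean document; each statement's English description precedes it below -/
import Mathlib

section
/- Fix α ∈ (0,1/2). Let p ∈ [0,1], x > 0, and let X ~ B(p,x) be a scaled Bernoulli random variable. Then ES_α(X) = x · min{1, p/α}, and σ²_{ES_α(X)} = x²(p − p²)/α² if p ≤ α, while σ²_{ES_α(X)} = 0 if p > α. -/
open MeasureTheory ProbabilityTheory Set Filter Topology
open scoped ENNReal NNReal

noncomputable section

/-- The cumulative distribution function of a distribution `μ` on `ℝ`. -/
def distCdf (μ : Measure ℝ) (t : ℝ) : ℝ := (μ (Set.Iic t)).toReal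

/-- The value at risk (generalized inverse of the cdf) at level `u`. -/
def VaR (μ : Measure ℝ) (u : ℝ) : ℝ := sInf {t : ℝ | u ≤ distCdf μ t}

/-- The expected shortfall at level `α`. -/
def ES (α : ℝ) (μ : Measure ℝ) : ℝ := (1 / α) * ∫ u in Set.Ioo (1 - α) 1, VaR μ u

/-- The variance associated to the estimation of the expected shortfall, with values in `[0,∞]`. -/
def sigmaSq (α : ℝ) (μ : Measure ℝ) : ℝ≥0∞ :=
  ENNReal.ofReal (1 / α ^ 2) *
    ∫⁻ t in Set.Ioi (VaR μ (1 - α)), ∫⁻ s in Set.Ioi (VaR μ (1 - α)),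
      ENNReal.ofReal (distCdf μ (min t s) - distCdf μ t * distCdf μ s)

/-- The standard deviation `σ_{ES_α}`. -/
def sigmaES (α : ℝ) (μ : Measure ℝ) : ℝ := Real.sqrt (sigmaSq α μ).toReal

/-- Empirical cdf of the first `N` entries of the data `x`. -/
def empCdf (N : ℕ) (x : ℕ → ℝ) (t : ℝ) : ℝ :=
  ((Finset.range N).filter fun i => x i ≤ t).card / N

/-- Generalized inverse of the empirical cdf. -/
def empInv (N : ℕ) (x : ℕ → ℝ) (u : ℝ) : ℝ := sInf {t : ℝ | u ≤ empCdf N x t}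

/-- The plug-in estimator of the expected shortfall from the first `N` data points of `x`. -/
def plugIn (α : ℝ) (N : ℕ) (x : ℕ → ℝ) : ℝ :=
  (1 / α) * ∫ u in Set.Ioo (1 - α) 1, empInv N x u

/-- The plug-in estimator on the `j`-th block (0-based) of size `m`. -/
def blockEst (α : ℝ) (m : ℕ) (x : ℕ → ℝ) (j : ℕ) : ℝ :=
  plugIn α m (fun i => x (j * m + i))

/-- The order statistics (sorted list) of `v 0, …, v (n-1)`. -/
def sortedVals (n : ℕ) (v : ℕ → ℝ) : List ℝ :=
  List.insertionSort (· ≤ ·) ((List.range n).map v)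

/-- The linearly interpolated empirical quantile function `Q̂` of the values `v 0, …, v (n-1)`:
`Q̂((j-1)/(n-1))` equals the `j`-th order statistic (1-based), interpolated linearly in between. -/
def interpQ (n : ℕ) (v : ℕ → ℝ) (β : ℝ) : ℝ :=
  let l := sortedVals n v
  let t := β * ((n : ℝ) - 1)
  let k := ⌊t⌋₊
  l.getD k 0 + (t - (k : ℝ)) * (l.getD (k + 1) (l.getD k 0) - l.getD k 0)

/-- The proposed estimator `Ŝ_N` with accuracy parameter `ε` and hyperparameters `β₁ ≤ β₂`:
the plug-in estimator truncated to `[Q̂(β₁), Q̂(β₂)]`, where `Q̂` is the interpolated quantile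
function of the block-wise plug-in estimators on `n = ⌊N/m⌋` disjoint blocks of size
`m = ⌈11/ε²⌉`. -/
def propEst (α ε β₁ β₂ : ℝ) (N : ℕ) (x : ℕ → ℝ) : ℝ :=
  let m := ⌈(11 : ℝ) / ε ^ 2⌉₊
  let n := N / m
  min (max (plugIn α N x) (interpQ n (blockEst α m x) β₁)) (interpQ n (blockEst α m x) β₂)

/-- Extension of a finite data vector to `ℕ → ℝ` (by `0` outside). -/
def pad (N : ℕ) (x : Fin N → ℝ) : ℕ → ℝ := fun i => if h : i < N then x ⟨i, h⟩ else 0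

/-!
The law `B(p, x)` has the step distribution function `F = 0, 1 - p, 1` on `(-∞, 0)`, `[0, x)`,
`[x, ∞)`, so `VaR_u` is `0` for `u ≤ 1 - p` and `x` for `u > 1 - p`; integrating over
`(1 - α, 1)` gives the expected shortfall. Above `VaR_{1-α}` the integrand
`F(min t s) - F(t) F(s)` vanishes unless `t, s < x`, where it equals `p - p²`. When `p ≤ α` the
variance integral therefore runs over the square `(0, x)²`; when `p > α` it runs over `(x, ∞)²`,
where `F ≡ 1`.
-/

theorem VaR_eq_of_forall_le_distCdf_iff {μ : Measure ℝ} {u c : ℝ}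
    (h : ∀ t, u ≤ distCdf μ t ↔ c ≤ t) : VaR μ u = c := by
  rw [VaR, show {t | u ≤ distCdf μ t} = Ici c from Set.ext h, csInf_Ici]

theorem sigmaSq_eq_zero_of_distCdf_eq_one {μ : Measure ℝ} {α : ℝ}
    (h : ∀ t, VaR μ (1 - α) < t → distCdf μ t = 1) : sigmaSq α μ = 0 := by
  have hzero : ∀ t ∈ Ioi (VaR μ (1 - α)), ∀ s ∈ Ioi (VaR μ (1 - α)),
      ENNReal.ofReal (distCdf μ (min t s) - distCdf μ t * distCdf μ s) = 0 := fun t ht s hs => by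
    rw [h t ht, h s hs, h _ (lt_min ht hs), mul_one, sub_self, ENNReal.ofReal_zero]
  rw [sigmaSq, mul_eq_zero]
  refine Or.inr <| (setLIntegral_congr_fun measurableSet_Ioi fun t ht => ?_).trans lintegral_zero
  exact (setLIntegral_congr_fun measurableSet_Ioi (hzero t ht)).trans lintegral_zero

theorem setLIntegral_Ioi_indicator_Iio_const (a b : ℝ) (c : ℝ≥0∞) :
    ∫⁻ s in Ioi a, (Iio b).indicator (fun _ => c) s = c * ENNReal.ofReal (b - a) := by
  rw [lintegral_indicator_const measurableSet_Iio, Measure.restrict_apply measurableSet_Iio,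
    Iio_inter_Ioi, Real.volume_Ioo]

def twoPointCdf (a b p t : ℝ) : ℝ := if t < a then 0 else if t < b then 1 - p else 1

section TwoPoint

variable {μ : Measure ℝ} {a b p : ℝ}

theorem distCdf_eq_twoPointCdf [IsProbabilityMeasure μ] (hab : a < b) (hp : p ∈ Icc 0 1)
    (ha : μ {a} = ENNReal.ofReal (1 - p)) (hb : μ {b} = ENNReal.ofReal p) :
    distCdf μ = twoPointCdf a b p := by
  have hpair : μ {a, b} = 1 := by
    rw [insert_eq, measure_union (disjoint_singleton.mpr hab.ne) (measurableSet_singleton b),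
      ha, hb, ← ENNReal.ofReal_add (by linarith [hp.2]) hp.1, sub_add_cancel, ENNReal.ofReal_one]
  have hnull : μ {a, b}ᶜ = 0 := by
    rw [measure_compl (by measurability) (measure_ne_top μ _), hpair, measure_univ, tsub_self]
  funext t
  rw [distCdf, twoPointCdf, ← measure_inter_conull hnull, inter_comm]
  split_ifs with hta htb
  · rw [insert_inter_of_notMem (by simpa using hta),
      singleton_inter_of_notMem (by simp only [mem_Iic, not_le]; linarith), measure_empty,
      ENNReal.toReal_zero]
  · rw [insert_inter_of_mem (by simpa using hta), singleton_inter_of_notMem (by simpa using htb),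
      insert_empty_eq, ha, ENNReal.toReal_ofReal (by linarith [hp.2])]
  · rw [inter_eq_left.mpr (by rintro u (rfl | rfl) <;> simp only [mem_Iic] <;> linarith), hpair,
      ENNReal.toReal_one]

theorem VaR_of_distCdf_eq_twoPointCdf_of_le (hF : distCdf μ = twoPointCdf a b p) (hp : 0 ≤ p)
    {u : ℝ} (hu : 0 < u) (hup : u ≤ 1 - p) : VaR μ u = a := by
  refine VaR_eq_of_forall_le_distCdf_iff fun t => ?_
  rw [hF, twoPointCdf]
  split_ifs <;> constructor <;> intro <;> linarith

theorem VaR_of_distCdf_eq_twoPointCdf_of_lt (hF : distCdf μ = twoPointCdf a b p) (hab : a ≤ b)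
    (hp : p ≤ 1) {u : ℝ} (hup : 1 - p < u) (hu : u ≤ 1) : VaR μ u = b := by
  refine VaR_eq_of_forall_le_distCdf_iff fun t => ?_
  rw [hF, twoPointCdf]
  split_ifs <;> constructor <;> intro <;> linarith

theorem ES_of_distCdf_eq_twoPointCdf (hF : distCdf μ = twoPointCdf a b p) (hab : a ≤ b)
    (hp : p ∈ Icc 0 1) {α : ℝ} (hα : α ∈ Ioc 0 1) :
    ES α μ = a + (b - a) * min 1 (p / α) := by
  have hVaR : EqOn (VaR μ) (fun u => a + (Ioi (1 - p)).indicator (fun _ => b - a) u)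
      (Ioo (1 - α) 1) := by
    rintro u ⟨hαu, hu1⟩
    dsimp only
    by_cases hup : u ≤ 1 - p
    · rw [VaR_of_distCdf_eq_twoPointCdf_of_le hF hp.1 (by linarith [hα.2]) hup,
        indicator_of_notMem (by simpa using hup), add_zero]
    · push Not at hup
      rw [VaR_of_distCdf_eq_twoPointCdf_of_lt hF hab hp.2 hup hu1.le,
        indicator_of_mem (mem_Ioi.mpr hup), add_sub_cancel]
  have hlen : volume.real (Ioo (1 - α) 1 ∩ Ioi (1 - p)) = min α p := by
    rw [Ioo_inter_Ioi,
      Real.volume_real_Ioo_of_le (max_le (by linarith [hα.1]) (by linarith [hp.1])),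
      max_sub_sub_left, sub_sub_cancel]
  have hmin : min 1 (p / α) = min α p / α := by
    rw [← min_div_div_right hα.1.le, div_self hα.1.ne']
  rw [ES, setIntegral_congr_fun measurableSet_Ioo hVaR, integral_add (integrable_const a)
    ((integrable_const _).indicator measurableSet_Ioi), setIntegral_indicator measurableSet_Ioi,
    setIntegral_const, setIntegral_const, hlen, Real.volume_real_Ioo_of_le (by linarith [hα.1]),
    hmin, smul_eq_mul, smul_eq_mul, sub_sub_cancel]
  field_simp [hα.1.ne']

theorem ofReal_twoPointCdf_min_sub_mul {t s : ℝ} (ht : a < t) (hs : a < s) :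
    ENNReal.ofReal (twoPointCdf a b p (min t s) - twoPointCdf a b p t * twoPointCdf a b p s) =
      (Iio b).indicator (fun _ => ENNReal.ofReal (p - p ^ 2)) t *
        (Iio b).indicator (fun _ => 1) s := by
  have hF : ∀ u, a < u → twoPointCdf a b p u = if u < b then 1 - p else 1 :=
    fun u hu => if_neg (not_lt.mpr hu.le)
  rw [hF t ht, hF s hs, hF _ (lt_min ht hs)]
  by_cases htb : t < b <;> by_cases hsb : s < b <;> simp [htb, hsb]
  congr 1; ring

theorem lintegral_Ioi_ofReal_twoPointCdf_min_sub_mul (hab : a ≤ b) (hp : p ∈ Icc 0 1) :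
    ∫⁻ t in Ioi a, ∫⁻ s in Ioi a,
        ENNReal.ofReal (twoPointCdf a b p (min t s) - twoPointCdf a b p t * twoPointCdf a b p s) =
      ENNReal.ofReal ((b - a) ^ 2 * (p - p ^ 2)) := by
  have hmeas : Measurable ((Iio b).indicator fun _ : ℝ => (1 : ℝ≥0∞)) :=
    measurable_const.indicator measurableSet_Iio
  calc _ = ∫⁻ t in Ioi a, (Iio b).indicator (fun _ => ENNReal.ofReal (p - p ^ 2)) t *
          ∫⁻ s in Ioi a, (Iio b).indicator (fun _ => 1) s := by
        refine setLIntegral_congr_fun measurableSet_Ioi fun t ht => ?_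
        rw [← lintegral_const_mul _ hmeas]
        exact setLIntegral_congr_fun measurableSet_Ioi fun s hs =>
          ofReal_twoPointCdf_min_sub_mul ht hs
    _ = ENNReal.ofReal (p - p ^ 2) * ENNReal.ofReal (b - a) * (1 * ENNReal.ofReal (b - a)) := by
        rw [lintegral_mul_const _ (measurable_const.indicator measurableSet_Iio),
          setLIntegral_Ioi_indicator_Iio_const, setLIntegral_Ioi_indicator_Iio_const]
    _ = _ := by
        have hpp : 0 ≤ p - p ^ 2 := by nlinarith [hp.1, hp.2]
        rw [one_mul, ← ENNReal.ofReal_mul hpp,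
          ← ENNReal.ofReal_mul (mul_nonneg hpp (sub_nonneg.mpr hab))]
        congr 1; ring

theorem sigmaSq_of_distCdf_eq_twoPointCdf_of_le (hF : distCdf μ = twoPointCdf a b p)
    (hab : a ≤ b) (hp : p ∈ Icc 0 1) {α : ℝ} (hα : α < 1) (hpα : p ≤ α) :
    sigmaSq α μ = ENNReal.ofReal ((b - a) ^ 2 * (p - p ^ 2) / α ^ 2) := by
  rw [sigmaSq, VaR_of_distCdf_eq_twoPointCdf_of_le hF hp.1 (by linarith) (by linarith), hF,
    lintegral_Ioi_ofReal_twoPointCdf_min_sub_mul hab hp, ← ENNReal.ofReal_mul (by positivity),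
    one_div_mul_eq_div]

theorem sigmaSq_of_distCdf_eq_twoPointCdf_of_lt (hF : distCdf μ = twoPointCdf a b p)
    (hab : a ≤ b) (hp : p ≤ 1) {α : ℝ} (hα : 0 ≤ α) (hαp : α < p) : sigmaSq α μ = 0 := by
  refine sigmaSq_eq_zero_of_distCdf_eq_one fun t ht => ?_
  rw [VaR_of_distCdf_eq_twoPointCdf_of_lt hF hab hp (by linarith) (by linarith)] at ht
  rw [hF, twoPointCdf, if_neg (by linarith), if_neg (by linarith)]

end TwoPoint

/-- **Expected shortfall and variance of scaled Bernoulli distributions.** If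
`X ~ B(p, x)` (i.e. `P(X = 0) = 1 - p`, `P(X = x) = p`), then
`ES_α(X) = x min{1, p/α}`, and `σ²_{ES_α(X)} = x²(p - p²)/α²` if `p ≤ α`, `= 0` if `p > α`. -/
theorem es_sigmaSq_bernoulli
    (α p x : ℝ) (hα : α ∈ Set.Ioo (0 : ℝ) (1 / 2)) (hp : p ∈ Set.Icc (0 : ℝ) 1) (hx : 0 < x)
    (μ : Measure ℝ) [IsProbabilityMeasure μ]
    (h0 : μ {0} = ENNReal.ofReal (1 - p)) (hxp : μ {x} = ENNReal.ofReal p) :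
    ES α μ = x * min 1 (p / α) ∧
      (p ≤ α → sigmaSq α μ = ENNReal.ofReal (x ^ 2 * (p - p ^ 2) / α ^ 2)) ∧
      (α < p → sigmaSq α μ = 0) := by
  obtain ⟨hα0, hα2⟩ := hα
  have hF := distCdf_eq_twoPointCdf hx hp h0 hxp
  refine ⟨?_, fun hpα => ?_, fun hαp => ?_⟩
  · simpa using ES_of_distCdf_eq_twoPointCdf hF hx.le hp ⟨hα0, by linarith⟩
  · simpa using sigmaSq_of_distCdf_eq_twoPointCdf_of_le hF hx.le hp (by linarith) hpα
  · exact sigmaSq_of_distCdf_eq_twoPointCdf_of_lt hF hx.le hp.2 hα0.le hαp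
end
end

section
/- Let α ≤ 1/10 with α ∈ (0,1/2), let ε ≤ (1/2)√α, and assume N ε² ≥ 5. Then there exists a real-valued random variable X such that σ_{ES_α(X)} = 1, such that F_X^{−1} is 1-Lipschitz on [1−2α, 1−α/2], and such that the plug-in estimator built from N i.i.d. copies of X satisfies P(|T̂_N − ES_α(X)| ≥ ε σ_{ES_α(X)}) ≥ 1/(16 N ε²). -/
open MeasureTheory ProbabilityTheory Set Filter Topology
open scoped ENNReal NNReal

noncomputable section

/-! The hard instance puts a small mass `q ≈ 1/(8 N² ε²)` at a far point `M` and the rest at `0`,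
with `M` scaled so that `σ_{ES_α} = 1`. Since `q ≤ α`, the true expected shortfall is only
`M q / α`, whereas a single sample at `M` already pushes the plug-in estimator up to `M / (N α)`;
this overshoots by at least `ε`, and some sample lands at `M` with probability
`1 - (1 - q)^N ≥ N q / 2 = 1 / (16 N ε²)`. -/

lemma setLIntegral_Ioi_indicator_Iio (a b : ℝ) (c : ℝ≥0∞) :
    ∫⁻ x in Ioi a, (Iio b).indicator (fun _ => c) x = c * ENNReal.ofReal (b - a) := by
  rw [lintegral_indicator_const measurableSet_Iio, Measure.restrict_apply measurableSet_Iio,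
    Iio_inter_Ioi, Real.volume_Ioo]

def twoPoint (q M : ℝ) : Measure ℝ :=
  ENNReal.ofReal (1 - q) • Measure.dirac 0 + ENNReal.ofReal q • Measure.dirac M

section TwoPoint

variable {q M α : ℝ}

open scoped Classical in
lemma twoPoint_apply (q M : ℝ) {s : Set ℝ} (hs : MeasurableSet s) :
    twoPoint q M s = (if (0 : ℝ) ∈ s then ENNReal.ofReal (1 - q) else 0)
      + (if M ∈ s then ENNReal.ofReal q else 0) := by
  rw [twoPoint, Measure.add_apply, Measure.smul_apply, Measure.smul_apply,
    Measure.dirac_apply' _ hs, Measure.dirac_apply' _ hs]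
  simp [Set.indicator_apply]

instance (q M : ℝ) : IsFiniteMeasure (twoPoint q M) :=
  ⟨by simp [twoPoint_apply q M MeasurableSet.univ, ENNReal.add_lt_top]⟩

lemma isProbabilityMeasure_twoPoint (hq0 : 0 ≤ q) (hq1 : q ≤ 1) (M : ℝ) :
    IsProbabilityMeasure (twoPoint q M) := by
  constructor
  rw [twoPoint_apply q M MeasurableSet.univ]
  simp [← ENNReal.ofReal_add (by linarith : (0 : ℝ) ≤ 1 - q) hq0]

lemma twoPoint_singleton (hM : M ≠ 0) : twoPoint q M {M} = ENNReal.ofReal q := by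
  simp [twoPoint_apply q M (measurableSet_singleton M), Ne.symm hM]

lemma ae_eq_zero_or_eq_twoPoint : ∀ᵐ y ∂twoPoint q M, y = 0 ∨ y = M := by
  rw [ae_iff, show {y | ¬(y = 0 ∨ y = M)} = ({0, M} : Set ℝ)ᶜ by ext; simp,
    twoPoint_apply q M (Set.toFinite _).measurableSet.compl]
  simp

lemma distCdf_twoPoint_of_neg (hM : 0 < M) {t : ℝ} (ht : t < 0) :
    distCdf (twoPoint q M) t = 0 := by
  simp [distCdf, twoPoint_apply q M measurableSet_Iic, not_le.2 ht, not_le.2 (ht.trans hM)]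

lemma distCdf_twoPoint_of_nonneg_of_lt (hq1 : q ≤ 1) {t : ℝ} (ht0 : 0 ≤ t) (htM : t < M) :
    distCdf (twoPoint q M) t = 1 - q := by
  simp [distCdf, twoPoint_apply q M measurableSet_Iic, ht0, not_le.2 htM, sub_nonneg.2 hq1]

lemma distCdf_twoPoint_of_le (hq0 : 0 ≤ q) (hq1 : q ≤ 1) (hM : 0 ≤ M) {t : ℝ} (ht : M ≤ t) :
    distCdf (twoPoint q M) t = 1 := by
  rw [distCdf, twoPoint_apply q M measurableSet_Iic, if_pos (mem_Iic.2 (hM.trans ht)),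
    if_pos (mem_Iic.2 ht), ← ENNReal.ofReal_add (by linarith) hq0]
  simp

lemma VaR_twoPoint_of_le (hq0 : 0 ≤ q) (hq1 : q ≤ 1) (hM : 0 < M) {u : ℝ} (hu0 : 0 < u)
    (hu : u ≤ 1 - q) : VaR (twoPoint q M) u = 0 := by
  have hset : {t : ℝ | u ≤ distCdf (twoPoint q M) t} = Ici 0 := by
    ext t
    simp only [mem_ofPred_eq, mem_Ici]
    constructor
    · intro h
      by_contra! ht
      rw [distCdf_twoPoint_of_neg hM ht] at h
      linarith
    · intro ht
      rcases lt_or_ge t M with htM | htM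
      · rwa [distCdf_twoPoint_of_nonneg_of_lt hq1 ht htM]
      · rw [distCdf_twoPoint_of_le hq0 hq1 hM.le htM]; linarith
  rw [VaR, hset, csInf_Ici]

lemma VaR_twoPoint_of_lt (hq0 : 0 ≤ q) (hq1 : q ≤ 1) (hM : 0 < M) {u : ℝ} (hu : 1 - q < u)
    (hu1 : u ≤ 1) : VaR (twoPoint q M) u = M := by
  have hset : {t : ℝ | u ≤ distCdf (twoPoint q M) t} = Ici M := by
    ext t
    simp only [mem_ofPred_eq, mem_Ici]
    constructor
    · intro h
      by_contra! htM
      rcases lt_or_ge t 0 with ht | ht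
      · rw [distCdf_twoPoint_of_neg hM ht] at h; linarith
      · rw [distCdf_twoPoint_of_nonneg_of_lt hq1 ht htM] at h; linarith
    · intro ht
      rwa [distCdf_twoPoint_of_le hq0 hq1 hM.le ht]
  rw [VaR, hset, csInf_Ici]

lemma lipschitzOnWith_VaR_twoPoint (hq0 : 0 ≤ q) (hq1 : q ≤ 1) (hM : 0 < M) (K : ℝ≥0) :
    LipschitzOnWith K (fun u => VaR (twoPoint q M) u) (Ioc 0 (1 - q)) := by
  intro u hu v hv
  simp [VaR_twoPoint_of_le hq0 hq1 hM hu.1 hu.2, VaR_twoPoint_of_le hq0 hq1 hM hv.1 hv.2]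

lemma ES_twoPoint (hq0 : 0 ≤ q) (hM : 0 < M) (hα1 : α < 1) (hqα : q ≤ α) :
    ES α (twoPoint q M) = M * q / α := by
  have hVaR : EqOn (fun u => VaR (twoPoint q M) u) ((Ioi (1 - q)).indicator fun _ => M)
      (Ioo (1 - α) 1) := by
    intro u hu
    rcases le_or_gt u (1 - q) with h | h
    · simp [VaR_twoPoint_of_le hq0 (by linarith) hM (by linarith [hu.1]) h, not_lt.2 h]
    · simp [VaR_twoPoint_of_lt hq0 (by linarith) hM h hu.2.le, h]
  rw [ES, setIntegral_congr_fun measurableSet_Ioo hVaR,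
    setIntegral_indicator measurableSet_Ioi, Ioo_inter_Ioi,
    max_eq_right (by linarith : 1 - α ≤ 1 - q), setIntegral_const,
    Real.volume_real_Ioo_of_le (by linarith), smul_eq_mul]
  ring

lemma ofReal_distCdf_twoPoint_min_sub_mul (hq0 : 0 ≤ q) (hq1 : q ≤ 1) (hM : 0 < M) {t s : ℝ}
    (ht : 0 < t) (hs : 0 < s) :
    ENNReal.ofReal (distCdf (twoPoint q M) (min t s)
        - distCdf (twoPoint q M) t * distCdf (twoPoint q M) s)
      = (Iio M).indicator (fun _ => (Iio M).indicator (fun _ => ENNReal.ofReal ((1 - q) * q)) s)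
          t := by
  have hF := fun {r : ℝ} (hr : 0 < r) (hrM : r < M) =>
    distCdf_twoPoint_of_nonneg_of_lt (M := M) hq1 hr.le hrM
  have hF1 := fun {r : ℝ} (hr : M ≤ r) => distCdf_twoPoint_of_le hq0 hq1 hM.le hr
  rcases lt_or_ge t M with htM | htM <;> rcases lt_or_ge s M with hsM | hsM
  · rw [hF (lt_min ht hs) (min_lt_of_left_lt htM), hF ht htM, hF hs hsM]
    simp [htM, hsM]
    ring_nf
  · rw [min_eq_left (htM.le.trans hsM), hF ht htM, hF1 hsM]
    simp [htM, hsM]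
  · rw [min_eq_right (hsM.le.trans htM), hF hs hsM, hF1 htM]
    simp [htM]
  · rw [hF1 (le_min htM hsM), hF1 htM, hF1 hsM]
    simp [htM]

lemma sigmaSq_twoPoint (hq0 : 0 ≤ q) (hM : 0 < M) (hα1 : α < 1) (hqα : q ≤ α) :
    sigmaSq α (twoPoint q M) = ENNReal.ofReal ((1 - q) * q * M ^ 2 / α ^ 2) := by
  have hq1 : q ≤ 1 := by linarith
  have hinner : ∀ t ∈ Ioi (0 : ℝ), ∫⁻ s in Ioi 0, ENNReal.ofReal (distCdf (twoPoint q M) (min t s)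
        - distCdf (twoPoint q M) t * distCdf (twoPoint q M) s)
      = (Iio M).indicator (fun _ => ENNReal.ofReal ((1 - q) * q) * ENNReal.ofReal M) t := by
    intro t ht
    rw [setLIntegral_congr_fun measurableSet_Ioi
      fun s hs => ofReal_distCdf_twoPoint_min_sub_mul hq0 hq1 hM ht hs]
    by_cases htM : t ∈ Iio M
    · simp only [indicator_of_mem htM]
      rw [setLIntegral_Ioi_indicator_Iio, sub_zero]
    · simp [htM]
  rw [sigmaSq, VaR_twoPoint_of_le hq0 hq1 hM (by linarith) (by linarith),
    setLIntegral_congr_fun measurableSet_Ioi hinner, setLIntegral_Ioi_indicator_Iio, sub_zero,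
    ← ENNReal.ofReal_mul (by nlinarith), ← ENNReal.ofReal_mul (by positivity),
    ← ENNReal.ofReal_mul (by positivity)]
  congr 1
  ring

lemma sigmaES_twoPoint_eq_one (hq0 : 0 < q) (hα0 : 0 < α) (hα1 : α < 1) (hqα : q ≤ α) :
    sigmaES α (twoPoint q (α / √(q * (1 - q)))) = 1 := by
  have hq1 : 1 - q ≠ 0 := by linarith
  have hq : 0 < q * (1 - q) := mul_pos hq0 (by linarith)
  rw [sigmaES, sigmaSq_twoPoint hq0.le (by positivity) hα1 hqα, div_pow, Real.sq_sqrt hq.le,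
    show (1 - q) * q * (α ^ 2 / (q * (1 - q))) / α ^ 2 = 1 by field_simp]
  simp

end TwoPoint

section Empirical

variable {N : ℕ} {y : ℕ → ℝ} {u : ℝ}

lemma empCdf_eq_zero_of_neg (hy0 : ∀ i < N, 0 ≤ y i) {b : ℝ} (hb : b < 0) :
    empCdf N y b = 0 := by
  rw [empCdf, Finset.filter_false_of_mem fun i hi => not_le.2 (hb.trans_le
    (hy0 i (Finset.mem_range.1 hi)))]
  simp

lemma nonempty_setOf_le_empCdf (hN : 0 < N) (hu1 : u ≤ 1) :
    {t : ℝ | u ≤ empCdf N y t}.Nonempty := by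
  obtain ⟨b, hb⟩ := ((Finset.range N).image y).bddAbove
  refine ⟨b, ?_⟩
  rw [mem_ofPred_eq, empCdf, Finset.filter_true_of_mem fun i hi =>
    hb (Finset.mem_coe.2 (Finset.mem_image_of_mem y hi)), Finset.card_range,
    div_self (by exact_mod_cast hN.ne')]
  exact hu1

lemma bddBelow_setOf_le_empCdf (hy0 : ∀ i < N, 0 ≤ y i) (hu0 : 0 < u) :
    BddBelow {t : ℝ | u ≤ empCdf N y t} := by
  refine ⟨0, fun t ht => ?_⟩
  by_contra! htneg
  rw [mem_ofPred_eq, empCdf_eq_zero_of_neg hy0 htneg] at ht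
  linarith

lemma empInv_nonneg (hN : 0 < N) (hy0 : ∀ i < N, 0 ≤ y i) (hu0 : 0 < u) (hu1 : u ≤ 1) :
    0 ≤ empInv N y u :=
  le_csInf (nonempty_setOf_le_empCdf hN hu1) fun _ ht =>
    not_lt.1 fun htneg => by
      rw [mem_ofPred_eq, empCdf_eq_zero_of_neg hy0 htneg] at ht
      linarith

lemma le_of_one_sub_inv_lt_empCdf {b : ℝ} (h : 1 - 1 / (N : ℝ) < empCdf N y b) {i : ℕ}
    (hi : i < N) : y i ≤ b := by
  by_contra! hib
  have hN : (0 : ℝ) < N := by exact_mod_cast (Nat.zero_le i).trans_lt hi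
  have hsub : (Finset.range N).filter (fun j => y j ≤ b) ⊆ (Finset.range N).erase i :=
    fun j hj => Finset.mem_erase.2
      ⟨by rintro rfl; exact (Finset.mem_filter.1 hj).2.not_gt hib, (Finset.mem_filter.1 hj).1⟩
  have hcard := Finset.card_le_card hsub
  rw [Finset.card_erase_of_mem (Finset.mem_range.2 hi), Finset.card_range] at hcard
  have hcard' : (((Finset.range N).filter fun j => y j ≤ b).card : ℝ) ≤ N - 1 := by
    have := Nat.cast_le (α := ℝ) |>.2 hcard
    rwa [Nat.cast_sub (by omega), Nat.cast_one] at this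
  rw [empCdf, lt_div_iff₀ hN] at h
  have : (1 - 1 / (N : ℝ)) * N = N - 1 := by field_simp
  linarith

lemma le_empInv {i : ℕ} (hiN : i < N) (hu : 1 - 1 / (N : ℝ) < u) (hu1 : u ≤ 1) :
    y i ≤ empInv N y u :=
  le_csInf (nonempty_setOf_le_empCdf ((Nat.zero_le i).trans_lt hiN) hu1) fun _ ht =>
    le_of_one_sub_inv_lt_empCdf (hu.trans_le ht) hiN

lemma monotoneOn_empInv (hN : 0 < N) (hy0 : ∀ i < N, 0 ≤ y i) {a : ℝ} (ha : 0 < a) :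
    MonotoneOn (fun u => empInv N y u) (Icc a 1) := fun _ hu _ hv huv =>
  csInf_le_csInf (bddBelow_setOf_le_empCdf hy0 (ha.trans_le hu.1))
    (nonempty_setOf_le_empCdf hN hv.2) fun _ ht => huv.trans ht

/-- The empirical quantile function is at least `y i` on `(1 - 1/N, 1]` and nonnegative below. -/
lemma div_le_plugIn {α : ℝ} (hα1 : α < 1) (hNα : 1 / (N : ℝ) ≤ α) (hy0 : ∀ i < N, 0 ≤ y i)
    {i : ℕ} (hi : i < N) : y i / (N * α) ≤ plugIn α N y := by
  have hN : 0 < N := (Nat.zero_le i).trans_lt hi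
  have hNr : (0 : ℝ) < N := by exact_mod_cast hN
  have hα0 : 0 < α := (by positivity : (0 : ℝ) < 1 / N).trans_le hNα
  have hint : IntegrableOn (fun u => empInv N y u) (Ioo (1 - α) 1) :=
    ((monotoneOn_empInv hN hy0 (by linarith)).integrableOn_isCompact isCompact_Icc).mono_set
      Ioo_subset_Icc_self
  have hle : ∀ u ∈ Ioo (1 - α) 1, (Ioi (1 - 1 / (N : ℝ))).indicator (fun _ => y i) u
      ≤ empInv N y u := by
    intro u hu
    by_cases hNu : u ∈ Ioi (1 - 1 / (N : ℝ))
    · rw [indicator_of_mem hNu]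
      exact le_empInv hi hNu hu.2.le
    · rw [indicator_of_notMem hNu]
      exact empInv_nonneg hN hy0 (by linarith [hu.1]) hu.2.le
  have hmono := setIntegral_mono_on ((integrableOn_const (by simp)).indicator measurableSet_Ioi)
    hint measurableSet_Ioo hle
  rw [setIntegral_indicator measurableSet_Ioi, Ioo_inter_Ioi,
    max_eq_right (by linarith : 1 - α ≤ 1 - 1 / (N : ℝ)), setIntegral_const,
    Real.volume_real_Ioo_of_le (by linarith [(by positivity : (0 : ℝ) ≤ 1 / N)]),
    smul_eq_mul] at hmono
  rw [plugIn]
  calc y i / (N * α) = 1 / α * ((1 - (1 - 1 / N)) * y i) := by field_simp; ring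
    _ ≤ _ := by gcongr

end Empirical

lemma measure_pi_exists_mem {ι Ω : Type*} [Fintype ι] [MeasurableSpace Ω] (μ : Measure Ω)
    [IsProbabilityMeasure μ] {s : Set Ω} (hs : MeasurableSet s) :
    Measure.pi (fun _ : ι => μ) {x | ∃ i, x i ∈ s} = 1 - (1 - μ s) ^ Fintype.card ι := by
  have hcompl : {x : ι → Ω | ∃ i, x i ∈ s} = (univ.pi fun _ => sᶜ)ᶜ := by
    ext x; simp
  rw [hcompl, prob_compl_eq_one_sub (MeasurableSet.univ_pi fun _ => hs.compl), Measure.pi_pi,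
    Finset.prod_const, Finset.card_univ, prob_compl_eq_one_sub hs]

/-- By Bernoulli's inequality, `(1 - q)^n ≤ 1 / (1 + n q)`. -/
lemma mul_div_two_le_one_sub_one_sub_pow {q : ℝ} (hq0 : 0 ≤ q) (hq1 : q ≤ 1) {n : ℕ}
    (hnq : n * q ≤ 1) : n * q / 2 ≤ 1 - (1 - q) ^ n := by
  have hprod : (1 - q) ^ n * (1 + n * q) ≤ 1 :=
    calc (1 - q) ^ n * (1 + n * q) ≤ (1 - q) ^ n * (1 + q) ^ n := by
          gcongr
          exact one_add_mul_le_pow (by linarith) n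
      _ = (1 - q ^ 2) ^ n := by rw [← mul_pow]; ring
      _ ≤ 1 := pow_le_one₀ (by nlinarith) (by nlinarith)
  nlinarith [mul_nonneg hq0 (Nat.cast_nonneg (α := ℝ) n)]

lemma hardInstance_bounds {α ε q : ℝ} {N : ℕ} (hε : 0 < ε) (hεα : ε ≤ √α / 2)
    (hN : 5 ≤ N * ε ^ 2) (hq : q = 1 / (8 * N ^ 2 * ε ^ 2)) :
    0 < q ∧ q ≤ α / 2 ∧ N * q ≤ 1 ∧ 1 / N ≤ α ∧ ε * √(q * (1 - q)) + q ≤ 1 / N := by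
  have hN0 : (0 : ℝ) < N := by
    by_contra! h
    nlinarith
  have hα0 : 0 < α := Real.sqrt_pos.1 (by linarith)
  have hεα' : ε ^ 2 ≤ α / 4 := by
    have := pow_le_pow_left₀ hε.le hεα 2
    rw [div_pow, Real.sq_sqrt hα0.le] at this
    linarith
  have hq0 : 0 < q := by rw [hq]; positivity
  have hqN : 20 * q ≤ 1 / N := by
    rw [hq, ← mul_div_assoc, div_le_div_iff₀ (by positivity) hN0]; nlinarith
  have hq1 : q ≤ 1 := by
    have : 1 / (N : ℝ) ≤ 1 := by
      rw [div_le_one hN0, Nat.one_le_cast]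
      exact Nat.cast_pos.1 hN0
    linarith
  have hdev : ε * √(q * (1 - q)) ≤ 1 / (2 * N) := by
    refine (pow_le_pow_iff_left₀ (by positivity) (by positivity) two_ne_zero).1 ?_
    rw [mul_pow, Real.sq_sqrt (mul_nonneg hq0.le (by linarith)), div_pow, one_pow,
      le_div_iff₀ (by positivity)]
    have : ε ^ 2 * q * (8 * N ^ 2) = 1 := by rw [hq]; field_simp
    nlinarith
  have hNα : 1 / N ≤ α / 20 := by
    rw [div_le_div_iff₀ hN0 (by norm_num)]; nlinarith
  refine ⟨hq0, by linarith, ?_, by linarith, ?_⟩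
  · have := mul_le_mul_of_nonneg_left hqN hN0.le
    rw [mul_one_div_cancel hN0.ne'] at this
    linarith
  · have : 1 / (2 * (N : ℝ)) = 1 / N / 2 := by ring
    linarith

lemma toReal_measure_pi_twoPoint_exists_eq {N : ℕ} {q M : ℝ} (hq0 : 0 ≤ q) (hq1 : q ≤ 1)
    (hM : M ≠ 0) :
    ((Measure.pi fun _ : Fin N => twoPoint q M) {x | ∃ i, x i ∈ ({M} : Set ℝ)}).toReal
      = 1 - (1 - q) ^ N := by
  have := isProbabilityMeasure_twoPoint hq0 hq1 M
  rw [measure_pi_exists_mem _ (measurableSet_singleton M), twoPoint_singleton hM,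
    Fintype.card_fin, ENNReal.toReal_sub_of_le (pow_le_one₀ (by simp) tsub_le_self)
      ENNReal.one_ne_top, ENNReal.toReal_pow,
    ENNReal.toReal_sub_of_le (ENNReal.ofReal_le_one.2 hq1) ENNReal.one_ne_top,
    ENNReal.toReal_ofReal hq0, ENNReal.toReal_one]

lemma ae_pi_twoPoint {N : ℕ} {q M : ℝ} :
    ∀ᵐ x ∂(Measure.pi fun _ : Fin N => twoPoint q M), ∀ i, x i = 0 ∨ x i = M :=
  ae_all_iff.2 fun i =>
    (Measure.tendsto_eval_ae_ae (μ := fun _ : Fin N => twoPoint q M) (i := i)).eventually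
      ae_eq_zero_or_eq_twoPoint

lemma ES_twoPoint_add_le_plugIn {α q M : ℝ} {N : ℕ} (hq0 : 0 ≤ q) (hM : 0 < M) (hα1 : α < 1)
    (hqα : q ≤ α) (hNα : 1 / (N : ℝ) ≤ α) {x : Fin N → ℝ} (hx : ∀ j, x j = 0 ∨ x j = M)
    {i : Fin N} (hi : x i = M) :
    ES α (twoPoint q M) + M * (1 / N - q) / α ≤ plugIn α N (pad N x) := by
  have hy0 : ∀ j < N, 0 ≤ pad N x j := fun j hj => by
    rcases hx ⟨j, hj⟩ with h | h <;> simp [pad, hj, h, hM.le]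
  have hplug := div_le_plugIn hα1 hNα hy0 i.2
  rw [show pad N x i = M by simpa [pad] using hi] at hplug
  rw [ES_twoPoint hq0 hM hα1 hqα]
  calc M * q / α + M * (1 / N - q) / α = M / (N * α) := by field_simp; ring
    _ ≤ _ := hplug

theorem plugIn_minimax_lower_bound_general
    (α ε : ℝ) (hα : α ∈ Set.Ioo (0 : ℝ) (1 / 2))
    (hε : 0 < ε) (hεα : ε ≤ Real.sqrt α / 2)
    (N : ℕ) (hN : (5 : ℝ) ≤ N * ε ^ 2) :
    ∃ μ : Measure ℝ, IsProbabilityMeasure μ ∧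
      sigmaES α μ = 1 ∧
      LipschitzOnWith 1 (fun u => VaR μ u) (Set.Icc (1 - 2 * α) (1 - α / 2)) ∧
      1 / (16 * N * ε ^ 2) ≤
        ((Measure.pi fun _ : Fin N => μ)
          {x | ε * sigmaES α μ ≤ |plugIn α N (pad N x) - ES α μ|}).toReal := by
  obtain ⟨hα0, hα2⟩ := hα
  set q : ℝ := 1 / (8 * N ^ 2 * ε ^ 2) with hq
  obtain ⟨hq0, hqα, hNq, hNα, hdev⟩ := hardInstance_bounds hε hεα hN hq
  set s := √(q * (1 - q))
  have hs : 0 < s := Real.sqrt_pos.2 (mul_pos hq0 (by linarith))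
  set M := α / s with hM
  have hσ : sigmaES α (twoPoint q M) = 1 :=
    sigmaES_twoPoint_eq_one hq0 hα0 (by linarith) (by linarith)
  have hμ := isProbabilityMeasure_twoPoint hq0.le (by linarith) M
  refine ⟨twoPoint q M, hμ, hσ,
    (lipschitzOnWith_VaR_twoPoint hq0.le (by linarith) (by positivity) 1).mono
      fun u hu => ⟨by linarith [hu.1], by linarith [hu.2]⟩, ?_⟩
  have hgap : ε ≤ M * (1 / N - q) / α := by
    rw [hM, show α / s * (1 / N - q) / α = (1 / N - q) / s by field_simp, le_div_iff₀ hs]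
    linarith
  have hevent : {x : Fin N → ℝ | ∃ i, x i ∈ ({M} : Set ℝ)}
      ≤ᵐ[Measure.pi fun _ => twoPoint q M]
        {x | ε * sigmaES α (twoPoint q M) ≤ |plugIn α N (pad N x) - ES α (twoPoint q M)|} := by
    filter_upwards [ae_pi_twoPoint] with x hx ⟨i, hi⟩
    have := ES_twoPoint_add_le_plugIn hq0.le (by positivity) (by linarith) (by linarith) hNα hx hi
    rw [hσ, mul_one]
    exact le_abs.2 (Or.inl (by linarith))
  calc 1 / (16 * N * ε ^ 2) = N * q / 2 := by rw [hq]; field_simp; ring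
    _ ≤ 1 - (1 - q) ^ N := mul_div_two_le_one_sub_one_sub_pow hq0.le (by linarith) hNq
    _ = _ := (toReal_measure_pi_twoPoint_exists_eq hq0.le (by linarith) (by positivity)).symm
    _ ≤ _ := ENNReal.toReal_mono (measure_ne_top _ _) (measure_mono_ae hevent)

/-- **Minimax lower bound for the plug-in estimator.** For `α ≤ 1/10`, `ε ≤ √α/2` and
`N ε² ≥ 5`, there is a distribution with `σ_{ES_α} = 1` and `1`-Lipschitz quantile function on
`[1-2α, 1-α/2]` such that the plug-in estimator from `N` i.i.d. samples satisfies
`P(|T̂_N - ES_α(X)| ≥ ε σ_{ES_α(X)}) ≥ 1/(16 N ε²)`. -/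
theorem plugIn_minimax_lower_bound
    (α ε : ℝ) (hα : α ∈ Set.Ioo (0 : ℝ) (1 / 2)) (hα10 : α ≤ 1 / 10)
    (hε : 0 < ε) (hεα : ε ≤ Real.sqrt α / 2)
    (N : ℕ) (hN : (5 : ℝ) ≤ N * ε ^ 2) :
    ∃ μ : Measure ℝ, IsProbabilityMeasure μ ∧
      sigmaES α μ = 1 ∧
      LipschitzOnWith 1 (fun u => VaR μ u) (Set.Icc (1 - 2 * α) (1 - α / 2)) ∧
      1 / (16 * N * ε ^ 2) ≤
        ((Measure.pi fun _ : Fin N => μ)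
          {x | ε * sigmaES α μ ≤ |plugIn α N (pad N x) - ES α μ|}).toReal :=
  plugIn_minimax_lower_bound_general α ε hα hε hεα N hN
end
end

section
/- Fix α ∈ (0,1/2) with α ≤ 1/2. Assume X has a Pareto distribution with parameters λ > 2 and x₀ > 0, and set r := (λ+1)/λ. Then: (i) F_X^{−1} is Lipschitz continuous on [1−2α, 1−α/2] with Lipschitz constant L = x₀ 2^r / (λ α^r); and (ii) the variance satisfies the two-sided bound x₀² α^{1−2r} / (2 λ² (3−2r)) ≤ σ²_{ES_α(X)} ≤ 2 x₀² α^{1−2r} / (λ² (r−1)(3−2r)). -/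
open MeasureTheory ProbabilityTheory Set Filter Topology
open scoped ENNReal NNReal

noncomputable section

/-!
The Pareto quantile function is explicit, `F⁻¹(u) = x₀ (1 - u)^(-1/λ)`, so the Lipschitz bound is
the mean value theorem with the derivative `x₀/λ · (1 - u)^(-r)` evaluated at `u = 1 - α/2`.

For the variance write `G = 1 - F` for the tail. Beyond `q = F⁻¹(1 - α)` the integrand
`F(min t s) - F(t) F(s)` equals `G(max t s) - G(t) G(s)`, and since `G ≤ α ≤ 1/2` there, it lies
between `G(max t s) / 2` and `G(max t s)`. The double integral of
`G(max t s) = x₀^λ (max t s)^(-λ)` over `(q, ∞)²` is `2 x₀^λ q^(2-λ) / ((λ-1)(λ-2))`, which after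
the factor `1/α²` equals `2 x₀² α^(1-2r) / ((λ-1)(λ-2))`; both bounds then compare
`(λ-1)(λ-2)` with `2λ(λ-2)` and with `λ - 2`.
-/

lemma lintegral_Ioi_rpow_of_lt {a c : ℝ} (ha : a < -1) (hc : 0 < c) :
    ∫⁻ t in Ioi c, ENNReal.ofReal (t ^ a) = ENNReal.ofReal (-c ^ (a + 1) / (a + 1)) := by
  rw [← integral_Ioi_rpow_of_lt ha hc, ofReal_integral_eq_lintegral_ofReal
    (integrableOn_Ioi_rpow_of_lt ha hc)]
  exact (ae_restrict_iff' measurableSet_Ioi).mpr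
    (ae_of_all _ fun t ht => Real.rpow_nonneg (hc.trans ht).le a)

lemma lintegral_Ioi_max_rpow_neg {p q t : ℝ} (hp : 1 < p) (hq : 0 < q) (ht : q < t) :
    ∫⁻ s in Ioi q, ENNReal.ofReal (max t s ^ (-p))
      = ENNReal.ofReal (p / (p - 1) * t ^ (1 - p) - q * t ^ (-p)) := by
  have ht0 : 0 < t := hq.trans ht
  have hp1 : p - 1 ≠ 0 := by linarith
  have h_near : ∫⁻ s in Ioc q t, ENNReal.ofReal (max t s ^ (-p))
      = ENNReal.ofReal (t ^ (-p) * (t - q)) := by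
    rw [setLIntegral_congr_fun measurableSet_Ioc fun s hs => by rw [max_eq_left hs.2],
      setLIntegral_const, Real.volume_Ioc, ← ENNReal.ofReal_mul (by positivity)]
  have h_far : ∫⁻ s in Ioi t, ENNReal.ofReal (max t s ^ (-p))
      = ENNReal.ofReal (t ^ (1 - p) / (p - 1)) := by
    rw [setLIntegral_congr_fun measurableSet_Ioi fun s hs => by rw [max_eq_right hs.le],
      lintegral_Ioi_rpow_of_lt (by linarith) ht0, neg_div, ← div_neg]
    ring_nf
  have h_pow : t ^ (-p) * t = t ^ (1 - p) := by
    rw [← Real.rpow_add_one ht0.ne']; ring_nf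
  rw [← Ioc_union_Ioi_eq_Ioi ht.le, lintegral_union measurableSet_Ioi (Ioc_disjoint_Ioi le_rfl),
    h_near, h_far, ← ENNReal.ofReal_add (by nlinarith [Real.rpow_nonneg ht0.le (-p)])
      (div_nonneg (Real.rpow_nonneg ht0.le _) (by linarith))]
  congr 1
  field_simp
  linear_combination (p - 1) * h_pow

lemma lintegral_Ioi_Ioi_max_rpow_neg {p q : ℝ} (hp : 2 < p) (hq : 0 < q) :
    ∫⁻ t in Ioi q, ∫⁻ s in Ioi q, ENNReal.ofReal (max t s ^ (-p))
      = ENNReal.ofReal (2 * q ^ (2 - p) / ((p - 1) * (p - 2))) := by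
  have hp1 : p - 1 ≠ 0 := by linarith
  have hp2 : p - 2 ≠ 0 := by linarith
  have h_int_far : IntegrableOn (fun t : ℝ => p / (p - 1) * t ^ (1 - p)) (Ioi q) :=
    (integrableOn_Ioi_rpow_of_lt (by linarith) hq).const_mul _
  have h_int_near : IntegrableOn (fun t : ℝ => q * t ^ (-p)) (Ioi q) :=
    (integrableOn_Ioi_rpow_of_lt (by linarith) hq).const_mul _
  have h_int : IntegrableOn (fun t : ℝ => p / (p - 1) * t ^ (1 - p) - q * t ^ (-p)) (Ioi q) :=
    h_int_far.sub h_int_near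
  have h_nonneg : ∀ t ∈ Ioi q, 0 ≤ p / (p - 1) * t ^ (1 - p) - q * t ^ (-p) := by
    intro t ht
    have ht0 : 0 < t := hq.trans ht
    have h_pow : t ^ (1 - p) = t ^ (-p) * t := by
      rw [← Real.rpow_add_one ht0.ne']; ring_nf
    rw [h_pow, sub_nonneg, mul_comm q, mul_left_comm]
    refine mul_le_mul_of_nonneg_left ?_ (Real.rpow_nonneg ht0.le _)
    rw [div_mul_eq_mul_div, le_div_iff₀ (by linarith)]
    nlinarith [mem_Ioi.mp ht]
  have h_pow : q * q ^ (1 - p) = q ^ (2 - p) := by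
    rw [mul_comm, ← Real.rpow_add_one hq.ne']; ring_nf
  rw [setLIntegral_congr_fun measurableSet_Ioi fun t ht => lintegral_Ioi_max_rpow_neg
      (by linarith) hq ht, ← ofReal_integral_eq_lintegral_ofReal h_int
      ((ae_restrict_iff' measurableSet_Ioi).mpr (ae_of_all _ h_nonneg)),
    integral_sub h_int_far h_int_near, integral_const_mul, integral_const_mul,
    integral_Ioi_rpow_of_lt (by linarith) hq, integral_Ioi_rpow_of_lt (by linarith) hq]
  congr 1
  have h_exp : 1 - p + 1 = 2 - p := by ring
  have hp1' : 1 - p ≠ 0 := by linarith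
  have hp2' : 2 - p ≠ 0 := by linarith
  rw [h_exp, neg_add_eq_sub]
  field_simp
  linear_combination -(p - 1) * (p - 2) ^ 2 * h_pow

lemma const_mul_setLIntegral_setLIntegral_le {α β : Type*} [MeasurableSpace α]
    [MeasurableSpace β] {μ : Measure α} {ν : Measure β} {s : Set α} {t : Set β}
    (hs : MeasurableSet s) (ht : MeasurableSet t) {f g : α → β → ℝ≥0∞} {c : ℝ≥0∞}
    (hfg : ∀ x ∈ s, ∀ y ∈ t, c * f x y ≤ g x y) :
    c * ∫⁻ x in s, ∫⁻ y in t, f x y ∂ν ∂μ ≤ ∫⁻ x in s, ∫⁻ y in t, g x y ∂ν ∂μ :=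
  (lintegral_const_mul_le _ _).trans <| setLIntegral_mono' hs fun x hx =>
    (lintegral_const_mul_le _ _).trans <| setLIntegral_mono' ht fun y hy => hfg x hx y hy

lemma lintegral_Ioi_Ioi_div_max_rpow {x₀ p q : ℝ} (hx₀ : 0 ≤ x₀) (hp : 2 < p) (hq : 0 < q) :
    ∫⁻ t in Ioi q, ∫⁻ s in Ioi q, ENNReal.ofReal ((x₀ / max t s) ^ p)
      = ENNReal.ofReal (2 * x₀ ^ p * q ^ (2 - p) / ((p - 1) * (p - 2))) := by
  have h_split : ∀ t ∈ Ioi q, ∀ s ∈ Ioi q, ENNReal.ofReal ((x₀ / max t s) ^ p)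
      = ENNReal.ofReal (x₀ ^ p) * ENNReal.ofReal (max t s ^ (-p)) := fun t ht s _ => by
    have h_max : 0 < max t s := (hq.trans ht).trans_le (le_max_left t s)
    rw [Real.div_rpow hx₀ h_max.le, Real.rpow_neg h_max.le, div_eq_mul_inv,
      ENNReal.ofReal_mul (by positivity)]
  rw [setLIntegral_congr_fun measurableSet_Ioi fun t ht => (setLIntegral_congr_fun
      measurableSet_Ioi (h_split t ht)).trans (lintegral_const_mul' _ _ ENNReal.ofReal_ne_top),
    lintegral_const_mul' _ _ ENNReal.ofReal_ne_top, lintegral_Ioi_Ioi_max_rpow_neg hp hq,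
    ← ENNReal.ofReal_mul (by positivity)]
  ring_nf

lemma lipschitzOnWith_mul_one_sub_rpow_neg {c p b : ℝ} (hc : 0 ≤ c) (hp : 0 < p) (hb : b < 1) :
    LipschitzOnWith (c * p * (1 - b) ^ (-(p + 1))).toNNReal (fun u => c * (1 - u) ^ (-p))
      (Iic b) := by
  refine (convex_Iic b).lipschitzOnWith_of_nnnorm_hasDerivWithin_le
    (f' := fun u => c * p * (1 - u) ^ (-(p + 1))) (fun u hu => ?_) (fun u hu => ?_)
  · have hu1 : 0 < 1 - u := by linarith [mem_Iic.mp hu]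
    convert ((((hasDerivAt_id' u).const_sub 1).rpow_const (p := -p) (Or.inl hu1.ne')).const_mul
      c).hasDerivWithinAt using 1
    ring_nf
  · have hb1 : 0 < 1 - b := by linarith
    have hu1 : 1 - b ≤ 1 - u := by linarith [mem_Iic.mp hu]
    have hu1' : 0 < 1 - u := hb1.trans_le hu1
    have h_deriv_nonneg : 0 ≤ c * p * (1 - u) ^ (-(p + 1)) := by positivity
    have h_bound_nonneg : 0 ≤ c * p * (1 - b) ^ (-(p + 1)) := by positivity
    rw [← NNReal.coe_le_coe, coe_nnnorm, Real.norm_of_nonneg h_deriv_nonneg,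
      Real.coe_toNNReal _ h_bound_nonneg]
    exact mul_le_mul_of_nonneg_left (Real.rpow_le_rpow_of_nonpos hb1 hu1 (by linarith))
      (by positivity)

lemma le_mul_rpow_neg_inv {x₀ lam p : ℝ} (hx₀ : 0 ≤ x₀) (hlam : 0 ≤ lam) (hp0 : 0 < p)
    (hp1 : p ≤ 1) : x₀ ≤ x₀ * p ^ (-lam⁻¹) :=
  le_mul_of_one_le_right hx₀ (Real.one_le_rpow_of_pos_of_le_one_of_nonpos hp0 hp1
    (neg_nonpos.mpr (inv_nonneg.mpr hlam)))

lemma rpow_mul_mul_rpow_neg_inv_rpow_two_sub_div_sq {x₀ α lam : ℝ} (hx₀ : 0 < x₀) (hα : 0 < α)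
    (hlam : lam ≠ 0) :
    x₀ ^ lam * (x₀ * α ^ (-lam⁻¹)) ^ (2 - lam) / α ^ 2 = x₀ ^ 2 * α ^ (-1 - 2 / lam) := by
  rw [Real.mul_rpow hx₀.le (by positivity), ← mul_assoc, ← Real.rpow_add hx₀,
    ← Real.rpow_mul hα.le, ← Real.rpow_two, ← Real.rpow_two, mul_div_assoc,
    ← Real.rpow_sub hα]
  congr 2
  · ring
  · field_simp; ring

lemma pareto_tail_le_iff {x₀ lam p t : ℝ} (hx₀ : 0 < x₀) (hlam : 0 < lam) (hp : 0 < p)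
    (ht : 0 < t) : (x₀ / t) ^ lam ≤ p ↔ x₀ * p ^ (-lam⁻¹) ≤ t := by
  rw [← Real.le_rpow_inv_iff_of_pos (by positivity) hp.le hlam, div_le_iff₀ ht,
    Real.rpow_neg hp.le, ← div_eq_mul_inv, div_le_iff₀' (by positivity)]

def IsParetoCdf (μ : Measure ℝ) (x₀ lam : ℝ) : Prop :=
  ∀ t : ℝ, distCdf μ t = if t < x₀ then 0 else 1 - (x₀ / t) ^ lam

section Pareto

variable {μ : Measure ℝ} {x₀ lam : ℝ}

lemma VaR_of_isParetoCdf (hμ : IsParetoCdf μ x₀ lam) (hx₀ : 0 < x₀) (hlam : 0 < lam) {u : ℝ}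
    (hu0 : 0 < u) (hu1 : u < 1) : VaR μ u = x₀ * (1 - u) ^ (-lam⁻¹) := by
  have hx₀_le : x₀ ≤ x₀ * (1 - u) ^ (-lam⁻¹) :=
    le_mul_rpow_neg_inv hx₀.le hlam.le (by linarith) (by linarith)
  have h_sublevel : {t : ℝ | u ≤ distCdf μ t} = Ici (x₀ * (1 - u) ^ (-lam⁻¹)) := by
    ext t
    rw [mem_ofPred_eq, mem_Ici, hμ t]
    split_ifs with htx
    · exact iff_of_false (by linarith) (by linarith)
    · rw [le_sub_comm, pareto_tail_le_iff hx₀ hlam (by linarith) (by linarith [not_lt.mp htx])]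
  rw [VaR, h_sublevel, csInf_Ici]

lemma lipschitzOnWith_VaR_of_isParetoCdf (hμ : IsParetoCdf μ x₀ lam) (hx₀ : 0 < x₀)
    (hlam : 0 < lam) {a b : ℝ} (ha : 0 < a) (hb : b < 1) :
    LipschitzOnWith (x₀ * lam⁻¹ * (1 - b) ^ (-(lam⁻¹ + 1))).toNNReal (VaR μ) (Icc a b) := by
  have h_formula : LipschitzOnWith _ _ (Icc a b) :=
    (lipschitzOnWith_mul_one_sub_rpow_neg hx₀.le (inv_pos.mpr hlam) hb).mono Icc_subset_Iic_self
  intro u hu v hv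
  rw [VaR_of_isParetoCdf hμ hx₀ hlam (ha.trans_le hu.1) (hu.2.trans_lt hb),
    VaR_of_isParetoCdf hμ hx₀ hlam (ha.trans_le hv.1) (hv.2.trans_lt hb)]
  exact h_formula hu hv

lemma cdf_min_sub_mul_of_isParetoCdf (hμ : IsParetoCdf μ x₀ lam) {t s : ℝ} (ht : x₀ ≤ t)
    (hs : x₀ ≤ s) : distCdf μ (min t s) - distCdf μ t * distCdf μ s
      = (x₀ / max t s) ^ lam - (x₀ / t) ^ lam * (x₀ / s) ^ lam := by
  rcases le_total t s with hts | hst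
  · rw [min_eq_left hts, max_eq_right hts, hμ t, hμ s, if_neg ht.not_gt, if_neg hs.not_gt]
    ring
  · rw [min_eq_right hst, max_eq_left hst, hμ t, hμ s, if_neg ht.not_gt, if_neg hs.not_gt]
    ring

lemma cdf_min_sub_mul_mem_Icc_of_isParetoCdf (hμ : IsParetoCdf μ x₀ lam) (hx₀ : 0 < x₀)
    (hlam : 0 < lam) {α : ℝ} (hα0 : 0 < α) (hα : α ≤ 1 / 2) {t s : ℝ}
    (ht : x₀ * α ^ (-lam⁻¹) < t) (hs : x₀ * α ^ (-lam⁻¹) < s) :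
    distCdf μ (min t s) - distCdf μ t * distCdf μ s
      ∈ Icc ((x₀ / max t s) ^ lam / 2) ((x₀ / max t s) ^ lam) := by
  have hx₀q : x₀ ≤ x₀ * α ^ (-lam⁻¹) := le_mul_rpow_neg_inv hx₀.le hlam.le hα0 (by linarith)
  have hq : 0 < x₀ * α ^ (-lam⁻¹) := hx₀.trans_le hx₀q
  have h_tail_t : (x₀ / t) ^ lam ≤ 1 / 2 :=
    ((pareto_tail_le_iff hx₀ hlam hα0 (hq.trans ht)).mpr ht.le).trans hα
  have h_tail_s : (x₀ / s) ^ lam ≤ 1 / 2 :=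
    ((pareto_tail_le_iff hx₀ hlam hα0 (hq.trans hs)).mpr hs.le).trans hα
  have h_nonneg_t : 0 ≤ (x₀ / t) ^ lam := by have := hq.trans ht; positivity
  have h_nonneg_s : 0 ≤ (x₀ / s) ^ lam := by have := hq.trans hs; positivity
  rw [cdf_min_sub_mul_of_isParetoCdf hμ (hx₀q.trans ht.le) (hx₀q.trans hs.le)]
  rcases le_total t s with hts | hst
  · rw [max_eq_right hts]; constructor <;> nlinarith
  · rw [max_eq_left hst]; constructor <;> nlinarith

lemma sigmaSq_bounds_of_isParetoCdf (hμ : IsParetoCdf μ x₀ lam) (hx₀ : 0 < x₀) (hlam : 2 < lam)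
    {α : ℝ} (hα0 : 0 < α) (hα : α ≤ 1 / 2) :
    ENNReal.ofReal (x₀ ^ 2 * α ^ (-1 - 2 / lam) / ((lam - 1) * (lam - 2))) ≤ sigmaSq α μ ∧
      sigmaSq α μ ≤ ENNReal.ofReal (2 * x₀ ^ 2 * α ^ (-1 - 2 / lam) / ((lam - 1) * (lam - 2))) := by
  have hlam0 : 0 < lam := by linarith
  set q := x₀ * α ^ (-lam⁻¹) with hq_def
  have hq : 0 < q := by positivity
  have hVaR : VaR μ (1 - α) = q := by
    rw [VaR_of_isParetoCdf hμ hx₀ hlam0 (by linarith) (by linarith), sub_sub_cancel]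
  have h_cov : ∀ t ∈ Ioi q, ∀ s ∈ Ioi q, distCdf μ (min t s) - distCdf μ t * distCdf μ s
      ∈ Icc ((x₀ / max t s) ^ lam / 2) ((x₀ / max t s) ^ lam) := fun t ht s hs =>
    cdf_min_sub_mul_mem_Icc_of_isParetoCdf hμ hx₀ hlam0 hα0 hα ht hs
  have h_scale : 1 / α ^ 2 * (2 * x₀ ^ lam * q ^ (2 - lam) / ((lam - 1) * (lam - 2)))
      = 2 * x₀ ^ 2 * α ^ (-1 - 2 / lam) / ((lam - 1) * (lam - 2)) := by
    rw [mul_assoc (2 : ℝ) (x₀ ^ 2), ← rpow_mul_mul_rpow_neg_inv_rpow_two_sub_div_sq hx₀ hα0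
      hlam0.ne', hq_def]
    ring
  rw [sigmaSq, hVaR]
  constructor
  · calc ENNReal.ofReal (x₀ ^ 2 * α ^ (-1 - 2 / lam) / ((lam - 1) * (lam - 2)))
        = ENNReal.ofReal (1 / α ^ 2) * (ENNReal.ofReal 2⁻¹ * ∫⁻ t in Ioi q, ∫⁻ s in Ioi q,
            ENNReal.ofReal ((x₀ / max t s) ^ lam)) := by
          rw [lintegral_Ioi_Ioi_div_max_rpow hx₀.le hlam hq, ← ENNReal.ofReal_mul (by norm_num),
            ← ENNReal.ofReal_mul (by positivity), mul_left_comm, h_scale]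
          ring_nf
      _ ≤ _ := by
          gcongr
          refine const_mul_setLIntegral_setLIntegral_le measurableSet_Ioi measurableSet_Ioi
            fun t ht s hs => ?_
          rw [← ENNReal.ofReal_mul (by norm_num)]
          exact ENNReal.ofReal_le_ofReal (by linarith [(h_cov t ht s hs).1])
  · calc _ ≤ ENNReal.ofReal (1 / α ^ 2) * ∫⁻ t in Ioi q, ∫⁻ s in Ioi q,
            ENNReal.ofReal ((x₀ / max t s) ^ lam) := by
          gcongr 1
          refine setLIntegral_mono' measurableSet_Ioi fun t ht =>
            setLIntegral_mono' measurableSet_Ioi fun s hs =>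
              ENNReal.ofReal_le_ofReal (h_cov t ht s hs).2
      _ = _ := by
          rw [lintegral_Ioi_Ioi_div_max_rpow hx₀.le hlam hq, ← ENNReal.ofReal_mul (by positivity),
            h_scale]

end Pareto

theorem pareto_lipschitz_and_variance_general
    (α lam x₀ : ℝ) (hα : α ∈ Set.Ioo (0 : ℝ) (1 / 2))
    (hlam : 2 < lam) (hx₀ : 0 < x₀)
    (μ : Measure ℝ)
    (hPareto : ∀ t : ℝ, distCdf μ t = if t < x₀ then 0 else 1 - (x₀ / t) ^ lam)
    (r : ℝ) (hr : r = (lam + 1) / lam) :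
    LipschitzOnWith (Real.toNNReal (x₀ * 2 ^ r / (lam * α ^ r))) (fun u => VaR μ u)
      (Set.Icc (1 - 2 * α) (1 - α / 2)) ∧
    ENNReal.ofReal (x₀ ^ 2 * α ^ (1 - 2 * r) / (2 * lam ^ 2 * (3 - 2 * r))) ≤ sigmaSq α μ ∧
    sigmaSq α μ ≤
      ENNReal.ofReal (2 * x₀ ^ 2 * α ^ (1 - 2 * r) / (lam ^ 2 * (r - 1) * (3 - 2 * r))) := by
  obtain ⟨hα0, hα2⟩ := hα
  have hlam0 : 0 < lam := by linarith
  have hr_inv : r = lam⁻¹ + 1 := by rw [hr]; field_simp; ring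
  have h_exp : 1 - 2 * r = -1 - 2 / lam := by rw [hr_inv]; ring
  have h_lip_const :
      x₀ * lam⁻¹ * (1 - (1 - α / 2)) ^ (-(lam⁻¹ + 1)) = x₀ * 2 ^ r / (lam * α ^ r) := by
    rw [sub_sub_cancel, ← hr_inv, Real.rpow_neg (by positivity), Real.div_rpow hα0.le zero_le_two]
    field_simp
  obtain ⟨h_lower, h_upper⟩ := sigmaSq_bounds_of_isParetoCdf hPareto hx₀ hlam hα0 hα2.le
  refine ⟨h_lip_const ▸ lipschitzOnWith_VaR_of_isParetoCdf hPareto hx₀ hlam0 (by linarith)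
      (by linarith), le_trans (ENNReal.ofReal_le_ofReal ?_) h_lower,
    h_upper.trans (ENNReal.ofReal_le_ofReal ?_)⟩
  · have h_den : 2 * lam ^ 2 * (3 - 2 * r) = 2 * lam * (lam - 2) := by rw [hr]; field_simp; ring
    rw [h_exp, h_den]
    gcongr <;> nlinarith
  · have h_den : lam ^ 2 * (r - 1) * (3 - 2 * r) = lam - 2 := by rw [hr]; field_simp; ring
    rw [h_exp, h_den]
    gcongr
    nlinarith

/-- **Lipschitz constant of the quantile function and two-sided variance bounds for Pareto
distributions.** If `X` is Pareto with parameters `λ > 2`, `x₀ > 0`, and `r = (λ+1)/λ`, then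
`F⁻¹` is Lipschitz on `[1-2α, 1-α/2]` with constant `x₀ 2^r/(λ α^r)`, and
`x₀² α^{1-2r}/(2λ²(3-2r)) ≤ σ²_{ES_α(X)} ≤ 2 x₀² α^{1-2r}/(λ²(r-1)(3-2r))`. -/
theorem pareto_lipschitz_and_variance
    (α lam x₀ : ℝ) (hα : α ∈ Set.Ioo (0 : ℝ) (1 / 2)) (hα' : α ≤ 1 / 2)
    (hlam : 2 < lam) (hx₀ : 0 < x₀)
    (μ : Measure ℝ) [IsProbabilityMeasure μ]
    (hPareto : ∀ t : ℝ, distCdf μ t = if t < x₀ then 0 else 1 - (x₀ / t) ^ lam)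
    (r : ℝ) (hr : r = (lam + 1) / lam) :
    LipschitzOnWith (Real.toNNReal (x₀ * 2 ^ r / (lam * α ^ r))) (fun u => VaR μ u)
      (Set.Icc (1 - 2 * α) (1 - α / 2)) ∧
    ENNReal.ofReal (x₀ ^ 2 * α ^ (1 - 2 * r) / (2 * lam ^ 2 * (3 - 2 * r))) ≤ sigmaSq α μ ∧
    sigmaSq α μ ≤
      ENNReal.ofReal (2 * x₀ ^ 2 * α ^ (1 - 2 * r) / (lam ^ 2 * (r - 1) * (3 - 2 * r))) :=
  pareto_lipschitz_and_variance_general α lam x₀ hα hlam hx₀ μ hPareto r hr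
end
end
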